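/- For every natural number L and every real n ≥ 1, the total memory of the non-constant-rank butterfly subblocks satisfies ∑_{l=0}^{L} (2^{-|2l-L|/4} · n^{1/4})² · (2^{|2l-L|/4} · n^{1/4}) ≤ (2·2^{1/4}/(2^{1/4} - 1)) · n^{3/4}; in particular this sum is O(n^{3/4}) ≤ O(n). -/

import Mathlib

open Finset Real

lemma geom_partial_le (r : ℝ) (h0 : 0 ≤ r) (h1 : r < 1) (N : ℕ) :
    ∑ i ∈ Finset.range N, r ^ i ≤ (1 - r)⁻¹ := by
  rw [geom_sum_eq h1.ne]
  have hr : (0:ℝ) < 1 - r := by linarith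
  have heq : (r ^ N - 1) / (r - 1) = (1 - r ^ N) * (1 - r)⁻¹ := by
    rw [← neg_sub (1:ℝ) r, ← neg_sub (1:ℝ) (r ^ N), neg_div_neg_eq, div_eq_mul_inv]
  rw [heq]
  have hpn : (0:ℝ) ≤ r ^ N := pow_nonneg h0 N
  calc (1 - r ^ N) * (1 - r)⁻¹ ≤ 1 * (1 - r)⁻¹ :=
        mul_le_mul_of_nonneg_right (by linarith) (inv_nonneg.mpr hr.le)
    _ = (1 - r)⁻¹ := one_mul _

lemma key_sum (L : ℕ) :
    ∑ l ∈ Finset.range (L + 1), ((2:ℝ) ^ (-(1:ℝ)/4)) ^ (|2 * (l : ℤ) - (L : ℤ)|).toNat ≤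
      2 * (2 : ℝ) ^ ((1 : ℝ) / 4) / ((2 : ℝ) ^ ((1 : ℝ) / 4) - 1) := by
  set r : ℝ := (2:ℝ) ^ (-(1:ℝ)/4) with hrdef
  have h2 : (1:ℝ) < 2 := one_lt_two
  have hr0 : 0 < r := Real.rpow_pos_of_pos (by norm_num) _
  have hr1 : r < 1 := by
    rw [hrdef]
    apply Real.rpow_lt_one_of_one_lt_of_neg h2 (by norm_num)
  set M := L / 2 with hM
  have hML : M ≤ L := Nat.div_le_self _ _
  have hsplit : ∑ l ∈ Finset.range (L + 1), r ^ (|2 * (l : ℤ) - (L : ℤ)|).toNat =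
      (∑ l ∈ Finset.range (M + 1), r ^ (|2 * (l : ℤ) - (L : ℤ)|).toNat) +
      ∑ l ∈ Finset.Ico (M + 1) (L + 1), r ^ (|2 * (l : ℤ) - (L : ℤ)|).toNat := by
    simp only [Finset.range_eq_Ico]
    exact (Finset.sum_Ico_consecutive _ (Nat.zero_le _) (by omega)).symm
  rw [hsplit]
  have hA : (∑ l ∈ Finset.range (M + 1), r ^ (|2 * (l : ℤ) - (L : ℤ)|).toNat) ≤ (1 - r)⁻¹ := by
    calc ∑ l ∈ Finset.range (M + 1), r ^ (|2 * (l : ℤ) - (L : ℤ)|).toNat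
        ≤ ∑ l ∈ Finset.range (M + 1), r ^ (M - l) := by
          apply Finset.sum_le_sum
          intro l hl
          rw [Finset.mem_range] at hl
          apply pow_le_pow_of_le_one hr0.le hr1.le
          have h2l : 2 * (l : ℤ) - (L : ℤ) ≤ 0 := by omega
          rw [abs_of_nonpos h2l]
          omega
      _ = ∑ k ∈ Finset.range (M + 1), r ^ k := by
          rw [← Finset.sum_range_reflect]
          apply Finset.sum_congr rfl
          intro i hi
          rw [Finset.mem_range] at hi
          congr 1
          omega
      _ ≤ (1 - r)⁻¹ := geom_partial_le r hr0.le hr1 _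
  have hB : (∑ l ∈ Finset.Ico (M + 1) (L + 1), r ^ (|2 * (l : ℤ) - (L : ℤ)|).toNat) ≤ (1 - r)⁻¹ := by
    calc ∑ l ∈ Finset.Ico (M + 1) (L + 1), r ^ (|2 * (l : ℤ) - (L : ℤ)|).toNat
        ≤ ∑ l ∈ Finset.Ico (M + 1) (L + 1), r ^ (l - M) := by
          apply Finset.sum_le_sum
          intro l hl
          rw [Finset.mem_Ico] at hl
          obtain ⟨hl1, hl2⟩ := hl
          apply pow_le_pow_of_le_one hr0.le hr1.le
          have h2l : (0:ℤ) ≤ 2 * (l : ℤ) - (L : ℤ) := by omega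
          rw [abs_of_nonneg h2l]
          omega
      _ = ∑ i ∈ Finset.range (L + 1 - (M + 1)), r ^ (i + 1) := by
          rw [Finset.sum_Ico_eq_sum_range]
          apply Finset.sum_congr rfl
          intro i _
          congr 1
          omega
      _ ≤ ∑ i ∈ Finset.range (L + 1 - (M + 1)), r ^ i := by
          apply Finset.sum_le_sum
          intro i _
          apply pow_le_pow_of_le_one hr0.le hr1.le
          omega
      _ ≤ (1 - r)⁻¹ := geom_partial_le r hr0.le hr1 _
  have ht1 : (1:ℝ) < (2:ℝ) ^ ((1:ℝ)/4) :=
    (Real.one_lt_rpow_iff_of_pos (by norm_num)).mpr (Or.inl ⟨h2, by norm_num⟩)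
  have hrt : r = ((2:ℝ) ^ ((1:ℝ)/4))⁻¹ := by
    rw [hrdef, ← Real.rpow_neg (by norm_num : (0:ℝ) ≤ 2)]
    norm_num
  have hfin : (1 - r)⁻¹ + (1 - r)⁻¹ ≤ 2 * (2 : ℝ) ^ ((1 : ℝ) / 4) / ((2 : ℝ) ^ ((1 : ℝ) / 4) - 1) := by
    set t := (2:ℝ) ^ ((1:ℝ)/4)
    rw [hrt]
    have ht0 : (0:ℝ) < t := by linarith
    have hsub : (1 - t⁻¹) = (t - 1) / t := by field_simp
    rw [hsub, inv_div]
    exact le_of_eq (by ring)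
  linarith

/-- For every natural number `L` and every real `n ≥ 1`, the total memory of the
non-constant-rank butterfly subblocks satisfies
`∑_{l=0}^{L} (2^{-|2l-L|/4}·n^{1/4})²·(2^{|2l-L|/4}·n^{1/4})
  ≤ (2·2^{1/4}/(2^{1/4} - 1))·n^{3/4}`. -/
theorem butterfly_memory_bound (L : ℕ) (n : ℝ) (hn : 1 ≤ n) :
    ∑ l ∈ Finset.range (L + 1),
        ((2 : ℝ) ^ (-((|2 * (l : ℤ) - (L : ℤ)| : ℝ)) / 4) * n ^ ((1 : ℝ) / 4)) ^ 2 *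
          ((2 : ℝ) ^ ((|2 * (l : ℤ) - (L : ℤ)| : ℝ) / 4) * n ^ ((1 : ℝ) / 4)) ≤
      (2 * (2 : ℝ) ^ ((1 : ℝ) / 4) / ((2 : ℝ) ^ ((1 : ℝ) / 4) - 1)) * n ^ ((3 : ℝ) / 4) := by
  have hn0 : (0:ℝ) < n := by linarith
  have h2pos : (0:ℝ) < 2 := by norm_num
  have hterm : ∀ l ∈ Finset.range (L + 1),
      ((2 : ℝ) ^ (-((|2 * (l : ℤ) - (L : ℤ)| : ℝ)) / 4) * n ^ ((1 : ℝ) / 4)) ^ 2 *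
          ((2 : ℝ) ^ ((|2 * (l : ℤ) - (L : ℤ)| : ℝ) / 4) * n ^ ((1 : ℝ) / 4)) =
        ((2:ℝ) ^ (-(1:ℝ)/4)) ^ (|2 * (l : ℤ) - (L : ℤ)|).toNat * n ^ ((3:ℝ)/4) := by
    intro l _
    have habs : |2 * ((l : ℤ) : ℝ) - ((L : ℤ) : ℝ)| = ((|2 * (l : ℤ) - (L : ℤ)| : ℤ) : ℝ) := by
      push_cast
      ring
    rw [habs]
    set x : ℝ := ((|2 * (l : ℤ) - (L : ℤ)| : ℤ) : ℝ) with hx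
    have h1 : ((2:ℝ) ^ (-(1:ℝ)/4)) ^ (|2 * (l : ℤ) - (L : ℤ)|).toNat = (2:ℝ) ^ (-x/4) := by
      rw [← Real.rpow_natCast ((2:ℝ) ^ (-(1:ℝ)/4)) _, ← Real.rpow_mul (by norm_num : (0:ℝ) ≤ 2)]
      congr 1
      have hc : (((|2 * (l : ℤ) - (L : ℤ)|).toNat : ℝ)) = x := by
        rw [hx]
        norm_cast
        exact Int.toNat_of_nonneg (abs_nonneg _)
      rw [hc]
      ring
    rw [h1]
    have e1 : ((2:ℝ) ^ (-x/4) * n ^ ((1:ℝ)/4)) ^ 2 * ((2:ℝ) ^ (x/4) * n ^ ((1:ℝ)/4)) =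
        ((2:ℝ) ^ (-x/4) * (2:ℝ) ^ (-x/4) * (2:ℝ) ^ (x/4)) *
          (n ^ ((1:ℝ)/4) * n ^ ((1:ℝ)/4) * n ^ ((1:ℝ)/4)) := by ring
    rw [e1, ← Real.rpow_add h2pos, ← Real.rpow_add h2pos, ← Real.rpow_add hn0,
      ← Real.rpow_add hn0]
    have e2 : -x/4 + -x/4 + x/4 = -x/4 := by ring
    have e3 : (1:ℝ)/4 + 1/4 + 1/4 = 3/4 := by norm_num
    rw [e2, e3]
  rw [Finset.sum_congr rfl hterm, ← Finset.sum_mul]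
  exact mul_le_mul_of_nonneg_right (key_sum L) (Real.rpow_nonneg hn0.le _)
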